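/- Let c ⊂ ℙ² be a smooth conic with equation q in the plane ⟨c⟩ = {x₃ = x₄ = 0} ⊂ ℙ⁴, and let Q' = x₃m₃ + x₄m₄ be a quadric containing ⟨c⟩. Let κ_c : H⁰(O_c(2)) → H⁰(O_c(2))/⟨m₃|_c, m₄|_c⟩ be the projection (assuming the quotient is 1-dimensional). Then the induced quadratic form on H⁰(O_c(1)) ≅ ℂ² (via the multiplication map Sym²H⁰(O_c(1)) ≅ H⁰(O_c(2))) is nondegenerate if and only if the pencil of sections ⟨m₃|_c, m₄|_c⟩ ⊂ H⁰(O_c(2)) has no base point on c. -/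

import Mathlib

/-!
Write `a, b, c` for the values of `φ` on the standard basis. The bilinear form in question has
Gram matrix `!![a, b; b, c]`, so it is nondegenerate iff `a * c ≠ b ^ 2`. Evaluation at
`[s : t]` is the linear form with coefficients `(s², st, t²)`, and since `m₃, m₄` span a
hyperplane, the linear forms vanishing on both are the multiples of `φ`. Hence a base point is a
point `[s : t]` with `(s², st, t²)` proportional to `(a, b, c)`, which exists iff `(a, b, c)` lies
on the conic `a * c = b ^ 2` (over an algebraically closed field every point of that conic is of
the form `(s², st, t²)`).
-/

namespace Stmt16

/-- A section of `O_c(2)` on the conic `c ≅ ℙ¹` is a binary quadratic form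
`a·s² + b·st + c·t²`, recorded by its coefficient vector `(a,b,c) : Fin 3 → ℂ`. -/
abbrev Sect2 := Fin 3 → ℂ

/-- Evaluation of a binary quadratic form at the point `[s : t] ∈ ℙ¹ ≅ c`. -/
def eval2 (m : Sect2) (s t : ℂ) : ℂ := m 0 * s ^ 2 + m 1 * s * t + m 2 * t ^ 2

open Module Matrix

theorem exists_smul_eq_of_le_ker {K V : Type*} [Field K] [AddCommGroup V] [Module K V]
    [FiniteDimensional K V] {W : Submodule K V} (hW : finrank K W + 1 = finrank K V)
    {φ ψ : Dual K V} (hφ : φ ≠ 0) (hφW : W ≤ LinearMap.ker φ) (hψW : W ≤ LinearMap.ker ψ) :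
    ∃ μ : K, μ • φ = ψ := by
  have hφ' : φ ∈ W.dualAnnihilator := (Submodule.mem_dualAnnihilator φ).2 hφW
  have hψ' : ψ ∈ W.dualAnnihilator := (Submodule.mem_dualAnnihilator ψ).2 hψW
  have hrank : finrank K W.dualAnnihilator = 1 := by
    have := Subspace.finrank_add_finrank_dualAnnihilator_eq W
    omega
  obtain ⟨μ, hμ⟩ := (finrank_eq_one_iff_of_nonzero' (⟨φ, hφ'⟩ : W.dualAnnihilator)
    (by simpa using hφ)).1 hrank ⟨ψ, hψ'⟩
  exact ⟨μ, congrArg Subtype.val hμ⟩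

section CommRing

variable {R : Type*} [CommRing R]

theorem dual_apply_eq_fin_three (φ : (Fin 3 → R) →ₗ[R] R) (m : Fin 3 → R) :
    φ m = m 0 * φ (Pi.single 0 1) + m 1 * φ (Pi.single 1 1) + m 2 * φ (Pi.single 2 1) := by
  have hm : m = m 0 • Pi.single 0 1 + m 1 • Pi.single 1 1 + m 2 • Pi.single 2 1 := by
    ext i; fin_cases i <;> simp
  conv_lhs => rw [hm]
  simp only [map_add, map_smul, smul_eq_mul]

def polarMatrix (φ : (Fin 3 → R) →ₗ[R] R) : Matrix (Fin 2) (Fin 2) R :=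
  !![φ (Pi.single 0 1), φ (Pi.single 1 1); φ (Pi.single 1 1), φ (Pi.single 2 1)]

theorem dotProduct_polarMatrix_mulVec (φ : (Fin 3 → R) →ₗ[R] R) (u v u' v' : R) :
    ![u, v] ⬝ᵥ polarMatrix φ *ᵥ ![u', v'] = φ ![u * u', u * v' + u' * v, v * v'] := by
  rw [dual_apply_eq_fin_three]
  simp only [polarMatrix, mulVec, dotProduct, Fin.sum_univ_two, of_apply,
    cons_val', cons_val_fin_one, cons_val_zero, cons_val_one, cons_val]
  ring

theorem separatingLeft_polarMatrix_iff (φ : (Fin 3 → R) →ₗ[R] R) :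
    (polarMatrix φ).SeparatingLeft ↔
      ∀ u v : R, (∀ u' v' : R, φ ![u * u', u * v' + u' * v, v * v'] = 0) → u = 0 ∧ v = 0 := by
  simp only [separatingLeft_def, Fin.forall_fin_succ_pi, Fin.forall_fin_zero_pi]
  change (∀ u v : R, (∀ u' v' : R, ![u, v] ⬝ᵥ polarMatrix φ *ᵥ ![u', v'] = 0) → ![u, v] = 0) ↔ _
  simp only [dotProduct_polarMatrix_mulVec, cons_eq_zero_iff, zero_empty, and_true]

def evalAt (s t : R) : (Fin 3 → R) →ₗ[R] R where
  toFun m := m 0 * s ^ 2 + m 1 * s * t + m 2 * t ^ 2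
  map_add' m n := by simp only [Pi.add_apply]; ring
  map_smul' c m := by simp only [Pi.smul_apply, smul_eq_mul, RingHom.id_apply]; ring

theorem det_polarMatrix_eq_zero_of_evalAt_eq_smul [IsDomain R] {φ : (Fin 3 → R) →ₗ[R] R}
    {s t μ : R} (hst : ¬(s = 0 ∧ t = 0)) (h : evalAt s t = μ • φ) : (polarMatrix φ).det = 0 := by
  have hs : s ^ 2 = μ * φ (Pi.single 0 1) := by
    simpa [evalAt] using LinearMap.congr_fun h (Pi.single 0 1)
  have hst' : s * t = μ * φ (Pi.single 1 1) := by
    simpa [evalAt] using LinearMap.congr_fun h (Pi.single 1 1)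
  have ht : t ^ 2 = μ * φ (Pi.single 2 1) := by
    simpa [evalAt] using LinearMap.congr_fun h (Pi.single 2 1)
  have hμ : μ ≠ 0 := by
    rintro rfl
    exact hst ⟨pow_eq_zero_iff two_ne_zero |>.1 (by simpa using hs),
      pow_eq_zero_iff two_ne_zero |>.1 (by simpa using ht)⟩
  have hdet : μ ^ 2 * (polarMatrix φ).det = 0 := by
    rw [polarMatrix, det_fin_two_of]
    linear_combination (-t ^ 2) * hs - (μ * φ (Pi.single 0 1)) * ht
      + (s * t + μ * φ (Pi.single 1 1)) * hst'
  exact (mul_eq_zero.1 hdet).resolve_left (pow_ne_zero 2 hμ)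

end CommRing

section IsAlgClosed

variable {K : Type*} [Field K] [IsAlgClosed K]

theorem exists_eq_veronese_of_mul_eq_sq {a b c : K} (h : a * c = b ^ 2) :
    ∃ s t : K, s ^ 2 = a ∧ s * t = b ∧ t ^ 2 = c := by
  obtain ⟨s, hs⟩ := IsAlgClosed.exists_pow_nat_eq a two_pos
  obtain ⟨t, ht⟩ := IsAlgClosed.exists_pow_nat_eq c two_pos
  have hst : (s * t) ^ 2 = b ^ 2 := by rw [mul_pow, hs, ht, h]
  rcases sq_eq_sq_iff_eq_or_eq_neg.1 hst with hst | hst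
  · exact ⟨s, t, hs, hst, ht⟩
  · exact ⟨s, -t, hs, by linear_combination -hst, by rw [neg_sq, ht]⟩

theorem exists_evalAt_eq_of_det_polarMatrix_eq_zero {φ : (Fin 3 → K) →ₗ[K] K} (hφ : φ ≠ 0)
    (hdet : (polarMatrix φ).det = 0) : ∃ s t : K, ¬(s = 0 ∧ t = 0) ∧ evalAt s t = φ := by
  obtain ⟨s, t, hs, hst, ht⟩ := exists_eq_veronese_of_mul_eq_sq
    (a := φ (Pi.single 0 1)) (b := φ (Pi.single 1 1)) (c := φ (Pi.single 2 1))
    (by simpa [polarMatrix, det_fin_two_of, sub_eq_zero, sq] using hdet)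
  have heval : evalAt s t = φ := by
    refine LinearMap.ext fun m => ?_
    rw [dual_apply_eq_fin_three φ m, ← hs, ← hst, ← ht]
    simp only [evalAt, LinearMap.coe_mk, AddHom.coe_mk]
    ring
  refine ⟨s, t, ?_, heval⟩
  rintro ⟨rfl, rfl⟩
  rw [← heval] at hφ
  exact hφ (LinearMap.ext fun m => by simp [evalAt])

theorem exists_common_zero_iff_det_polarMatrix_eq_zero {m3 m4 : Fin 3 → K}
    (hind : LinearIndependent K ![m3, m4]) {φ : (Fin 3 → K) →ₗ[K] K} (hφ : φ ≠ 0)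
    (h3 : φ m3 = 0) (h4 : φ m4 = 0) :
    (∃ s t : K, ¬(s = 0 ∧ t = 0) ∧ evalAt s t m3 = 0 ∧ evalAt s t m4 = 0) ↔
      (polarMatrix φ).det = 0 := by
  have span_le_ker (ψ : Dual K (Fin 3 → K)) (h3 : ψ m3 = 0) (h4 : ψ m4 = 0) :
      Submodule.span K (Set.range ![m3, m4]) ≤ LinearMap.ker ψ :=
    Submodule.span_le.2 (Set.range_subset_iff.2 (Fin.forall_fin_two.2 ⟨h3, h4⟩))
  have hcodim :
      finrank K (Submodule.span K (Set.range ![m3, m4])) + 1 = finrank K (Fin 3 → K) := by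
    rw [finrank_span_eq_card hind]
    simp
  constructor
  · rintro ⟨s, t, hst, e3, e4⟩
    obtain ⟨μ, hμ⟩ :=
      exists_smul_eq_of_le_ker hcodim hφ (span_le_ker φ h3 h4) (span_le_ker _ e3 e4)
    exact det_polarMatrix_eq_zero_of_evalAt_eq_smul hst hμ.symm
  · intro hdet
    obtain ⟨s, t, hst, rfl⟩ := exists_evalAt_eq_of_det_polarMatrix_eq_zero hφ hdet
    exact ⟨s, t, hst, h3, h4⟩

end IsAlgClosed

theorem kappa_nondegenerate_iff_basepoint_free
    (m3 m4 : Sect2) (hind : LinearIndependent ℂ ![m3, m4])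
    (φ : (Fin 3 → ℂ) →ₗ[ℂ] ℂ) (hφ : φ ≠ 0) (h3 : φ m3 = 0) (h4 : φ m4 = 0) :
    ((∀ u v : ℂ, (∀ u' v' : ℂ, φ ![u * u', u * v' + u' * v, v * v'] = 0) →
        u = 0 ∧ v = 0) ↔
      ¬∃ s t : ℂ, ¬(s = 0 ∧ t = 0) ∧ eval2 m3 s t = 0 ∧ eval2 m4 s t = 0) := by
  rw [← separatingLeft_polarMatrix_iff, separatingLeft_iff_det_ne_zero, ne_eq,
    ← exists_common_zero_iff_det_polarMatrix_eq_zero hind hφ h3 h4]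
  rfl

end Stmt16
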